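/- In a median graph G with a fixed basepoint v₀, let u, v, w be vertices such that u ∈ I(v₀,v) and v ∈ I(v₀,w), and such that v is the basis and w the anti-basis of an induced hypercube whose set of Θ-classes is a POF L outgoing from v. Then u ∈ I(v₀,w), v ∈ I(u,w), and the signature satisfies σ_{u,w} = σ_{u,v} ∪ L with σ_{u,v} ∩ L = ∅. -/

import Mathlib

namespace MedianPaper

variable {V : Type*}

/-- The metric interval `I(u,v)`: vertices on shortest `(u,v)`-paths. -/
def interval (G : SimpleGraph V) (u v : V) : Set V :=
  {w | G.dist u w + G.dist w v = G.dist u v}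

/-- A median graph: a connected graph in which every triple of vertices
has a unique median. -/
def MedianGraph (G : SimpleGraph V) : Prop :=
  G.Connected ∧ ∀ x y z : V, ∃! m : V,
    m ∈ interval G x y ∧ m ∈ interval G y z ∧ m ∈ interval G z x

/-- `u v x y` span a 4-cycle `u-v-y-x-u`, with opposite edge pairs
`(uv, xy)` and `(ux, vy)`. -/
def IsSquare (G : SimpleGraph V) (u v x y : V) : Prop :=
  G.Adj u v ∧ G.Adj x y ∧ G.Adj u x ∧ G.Adj v y ∧ u ≠ y ∧ v ≠ x

/-- Two edges are in relation Θ₀ if they are opposite edges of a common 4-cycle. -/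
def Theta0 (G : SimpleGraph V) (e f : Sym2 V) : Prop :=
  ∃ u v x y : V, IsSquare G u v x y ∧ e = s(u, v) ∧ f = s(x, y)

/-- Θ : the reflexive-transitive closure of Θ₀ on the edges of `G`. -/
def Theta (G : SimpleGraph V) (e f : Sym2 V) : Prop :=
  e ∈ G.edgeSet ∧ f ∈ G.edgeSet ∧ Relation.ReflTransGen (Theta0 G) e f

/-- The Θ-classes of `G`: equivalence classes of edges under Θ. -/
def ThetaClass (G : SimpleGraph V) (C : Set (Sym2 V)) : Prop :=
  ∃ e ∈ G.edgeSet, C = {f | Theta G e f}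

/-- The edge set `C` separates `u` from `v` : they lie in different
components of `G` minus `C`. -/
def Separates (G : SimpleGraph V) (C : Set (Sym2 V)) (u v : V) : Prop :=
  ¬ (G.deleteEdges C).Reachable u v

/-- The signature `σ_{u,v}`: Θ-classes separating `u` from `v`. -/
def signature (G : SimpleGraph V) (u v : V) : Set (Set (Sym2 V)) :=
  {C | ThetaClass G C ∧ Separates G C u v}

/-- `H`, `H'` are the two connected components (halfspaces) of `G` deprived
of the edges in `C`. -/
def IsHalfspacePair (G : SimpleGraph V) (C : Set (Sym2 V)) (H H' : Set V) : Prop :=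
  H.Nonempty ∧ H'.Nonempty ∧ Disjoint H H' ∧ H ∪ H' = Set.univ ∧
  (∀ x ∈ H, ∀ y ∈ H, (G.deleteEdges C).Reachable x y) ∧
  (∀ x ∈ H', ∀ y ∈ H', (G.deleteEdges C).Reachable x y) ∧
  (∀ x ∈ H, ∀ y ∈ H', ¬ (G.deleteEdges C).Reachable x y)

/-- The boundary of a halfspace `H` of the Θ-class `C` : vertices of `H`
incident to an edge of `C`. -/
def boundarySet (G : SimpleGraph V) (C : Set (Sym2 V)) (H : Set V) : Set V :=
  {x | x ∈ H ∧ ∃ y, G.Adj x y ∧ s(x, y) ∈ C}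

/-- Orthogonality of Θ-classes: there is a common square using both. -/
def Orthogonal (G : SimpleGraph V) (C₁ C₂ : Set (Sym2 V)) : Prop :=
  ∃ u v x y : V, IsSquare G u v x y ∧
    s(u, v) ∈ C₁ ∧ s(x, y) ∈ C₁ ∧ s(u, x) ∈ C₂ ∧ s(v, y) ∈ C₂

/-- A pairwise orthogonal family (POF) of Θ-classes. -/
def IsPOF (G : SimpleGraph V) (X : Set (Set (Sym2 V))) : Prop :=
  (∀ C ∈ X, ThetaClass G C) ∧
  ∀ C ∈ X, ∀ C' ∈ X, C ≠ C' → Orthogonal G C C'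

/-- The `k`-dimensional hypercube graph, on subsets of `{1,…,k}`;
two subsets are adjacent iff their symmetric difference has one element. -/
def cubeGraph (k : ℕ) : SimpleGraph (Finset (Fin k)) where
  Adj A B := (symmDiff A B).card = 1
  symm := by
    constructor
    intro A B h
    rwa [symmDiff_comm] at h
  loopless := by
    constructor
    intro A h
    simp [symmDiff_self] at h

/-- `S` induces a hypercube of dimension `k` in `G`. -/
def IsCubeDim (G : SimpleGraph V) (S : Set V) (k : ℕ) : Prop :=
  Nonempty ((G.induce S) ≃g cubeGraph k)

/-- `S` induces a hypercube in `G`. -/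
def IsInducedCube (G : SimpleGraph V) (S : Set V) : Prop :=
  ∃ k, IsCubeDim G S k

/-- The dimension of `G` is `d`: the largest dimension of an induced hypercube. -/
def GraphDim (G : SimpleGraph V) (d : ℕ) : Prop :=
  (∃ S : Set V, IsCubeDim G S d) ∧ ∀ (S : Set V) (k : ℕ), IsCubeDim G S k → k ≤ d

/-- The Θ-classes of the edges of the induced subgraph on `S`. -/
def cubeClasses (G : SimpleGraph V) (S : Set V) : Set (Set (Sym2 V)) :=
  {C | ThetaClass G C ∧ ∃ x ∈ S, ∃ y ∈ S, G.Adj x y ∧ s(x, y) ∈ C}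

/-- With the `v₀`-orientation, `b ∈ S` is the basis of `S`: all edges of `S`
incident to `b` are outgoing from `b`. -/
def IsBasis (G : SimpleGraph V) (v₀ : V) (S : Set V) (b : V) : Prop :=
  b ∈ S ∧ ∀ w ∈ S, G.Adj b w → G.dist v₀ b < G.dist v₀ w

/-- With the `v₀`-orientation, `b ∈ S` is the anti-basis of `S`: all edges of `S`
incident to `b` are ingoing to `b`. -/
def IsAntiBasis (G : SimpleGraph V) (v₀ : V) (S : Set V) (b : V) : Prop :=
  b ∈ S ∧ ∀ w ∈ S, G.Adj b w → G.dist v₀ w < G.dist v₀ b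

/-- `ℰ⁻(v)` : the Θ-classes containing at least one edge ingoing to `v`. -/
def inClasses (G : SimpleGraph V) (v₀ v : V) : Set (Set (Sym2 V)) :=
  {C | ThetaClass G C ∧ ∃ u, G.Adj u v ∧ G.dist v₀ u < G.dist v₀ v ∧ s(u, v) ∈ C}

/-- The ladder set `L_{u,v}`: classes of the signature `σ_{u,v}` having an
edge incident to `u`. -/
def ladder (G : SimpleGraph V) (u v : V) : Set (Set (Sym2 V)) :=
  {C | C ∈ signature G u v ∧ ∃ w, G.Adj u w ∧ s(u, w) ∈ C}

/-- A POF each of whose classes has an edge outgoing from `u`. -/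
def OutgoingPOF (G : SimpleGraph V) (v₀ u : V) (L : Set (Set (Sym2 V))) : Prop :=
  IsPOF G L ∧ ∀ C ∈ L, ∃ w, G.Adj u w ∧ G.dist v₀ u < G.dist v₀ w ∧ s(u, w) ∈ C

/-- A POF each of whose classes has an edge ingoing to `u`. -/
def IngoingPOF (G : SimpleGraph V) (v₀ u : V) (X : Set (Set (Sym2 V))) : Prop :=
  IsPOF G X ∧ ∀ C ∈ X, ∃ w, G.Adj w u ∧ G.dist v₀ w < G.dist v₀ u ∧ s(w, u) ∈ C

/-- `m` is a median of the triple `x, y, z`. -/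
def IsMedian (G : SimpleGraph V) (x y z m : V) : Prop :=
  m ∈ interval G x y ∧ m ∈ interval G y z ∧ m ∈ interval G z x

/-- `b` is the milestone following `a` on the way to `v`: `b` is the anti-basis of
the induced hypercube with basis `a` whose Θ-classes are the ladder set `L_{a,v}`. -/
def NextMilestone (G : SimpleGraph V) (v₀ v a b : V) : Prop :=
  ∃ S : Set V, IsInducedCube G S ∧ IsBasis G v₀ S a ∧ IsAntiBasis G v₀ S b ∧
    cubeClasses G S = ladder G a v

/-- The milestone set `Π(u,v)`: vertices obtained from `u` by iterating the
next-milestone step towards `v`. -/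
def MilestoneSet (G : SimpleGraph V) (v₀ u v : V) : Set V :=
  {p | Relation.ReflTransGen (fun a b => NextMilestone G v₀ v a b) u p}

/-- The penultimate milestone `π̄(u,v)`: the milestone of `Π(u,v)` other than `v`
closest to `v`, i.e. whose next milestone is `v` itself. -/
def IsPenultimate (G : SimpleGraph V) (v₀ u v p : V) : Prop :=
  p ∈ MilestoneSet G v₀ u v ∧ p ≠ v ∧ NextMilestone G v₀ v p v

/-- A convex set of vertices. -/
def ConvexSet (G : SimpleGraph V) (H : Set V) : Prop :=
  ∀ u ∈ H, ∀ v ∈ H, interval G u v ⊆ H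

/-- A gated set of vertices: each vertex has a gate in `H`. -/
def GatedSet (G : SimpleGraph V) (H : Set V) : Prop :=
  ∀ x : V, ∃ g ∈ H, ∀ h ∈ H, g ∈ interval G x h


/-!
In a median graph the Θ-class of an edge `ab` consists exactly of the edges joining `W_{ab}` (the
vertices closer to `a`) to `W_{ba}`, so a Θ-class separates two vertices iff they lie on opposite
sides of any one of its edges. Because a square never folds back toward a vertex, distances from
`v₀` grow by one with each coordinate flipped away from the basis `v`; the anti-basis `w` is
therefore antipodal to `v`, and every vertex of the cube lies on a geodesic `v₀ → v → w`. So `u`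
and `v` lie on the `v₀`-side of every cube edge and `w` on the other side, while a Θ-class not
met by the cube cannot separate `v` from `w`, since the cube connects them.
-/

open SimpleGraph
open scoped symmDiff

section Metric

variable {G : SimpleGraph V}

/-- The set `W_{ab}` of the paper. -/
def closerSet (G : SimpleGraph V) (a b : V) : Set V :=
  {z | G.dist z a < G.dist z b}

@[simp]
theorem mem_closerSet {a b z : V} : z ∈ closerSet G a b ↔ G.dist z a < G.dist z b :=
  Iff.rfl

theorem dist_eq_add_one_of_adj_of_lt {a b z : V} (hab : G.Adj a b)
    (h : G.dist z a < G.dist z b) : G.dist z b = G.dist z a + 1 := by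
  have := hab.diff_dist_adj (u := z)
  omega

theorem dist_le_dist_add_one_of_adj {x y : V} (hxy : G.Adj x y) (z : V) :
    G.dist x z ≤ G.dist y z + 1 := by
  have := hxy.reachable.dist_triangle_left z
  rwa [dist_eq_one_iff_adj.mpr hxy, add_comm] at this

theorem exists_adj_dist_add_one_eq (hconn : G.Connected) {x y : V} (hne : x ≠ y) :
    ∃ x', G.Adj x x' ∧ G.dist x' y + 1 = G.dist x y := by
  obtain ⟨p, hp⟩ := hconn.exists_walk_length_eq_dist x y
  cases p with
  | nil => exact absurd rfl hne
  | @cons _ x' _ hadj q =>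
    have hq : G.dist x' y ≤ q.length := dist_le q
    have htri : G.dist x y ≤ G.dist x x' + G.dist x' y := hconn.dist_triangle
    rw [dist_eq_one_iff_adj.mpr hadj] at htri
    rw [Walk.length_cons] at hp
    exact ⟨x', hadj, by omega⟩

theorem mem_interval_trans (hconn : G.Connected) {a u v w : V} (hu : u ∈ interval G a v)
    (hv : v ∈ interval G a w) : u ∈ interval G a w ∧ v ∈ interval G u w := by
  have h₁ : G.dist u w ≤ G.dist u v + G.dist v w := hconn.dist_triangle
  have h₂ : G.dist a w ≤ G.dist a u + G.dist u w := hconn.dist_triangle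
  have hu : G.dist a u + G.dist u v = G.dist a v := hu
  have hv : G.dist a v + G.dist v w = G.dist a w := hv
  exact ⟨show G.dist a u + G.dist u w = G.dist a w by omega,
    show G.dist u v + G.dist v w = G.dist u w by omega⟩

theorem mem_closerSet_of_mem_interval_left {o x y z : V} (hx : z ∈ interval G o x)
    (hy : z ∈ interval G o y) (hxy : G.dist o x < G.dist o y) : z ∈ closerSet G x y := by
  have hx : G.dist o z + G.dist z x = G.dist o x := hx
  have hy : G.dist o z + G.dist z y = G.dist o y := hy
  show G.dist z x < G.dist z y
  omega

theorem mem_closerSet_of_mem_interval_right {o x y w : V} (hx : x ∈ interval G o w)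
    (hy : y ∈ interval G o w) (hxy : G.dist o x < G.dist o y) : w ∈ closerSet G y x := by
  have hx : G.dist o x + G.dist x w = G.dist o w := hx
  have hy : G.dist o y + G.dist y w = G.dist o w := hy
  show G.dist w y < G.dist w x
  rw [SimpleGraph.dist_comm (u := w) (v := y), SimpleGraph.dist_comm (u := w) (v := x)]
  omega

end Metric

section Median

variable {G : SimpleGraph V}

/-- The median of `a, b, z` is `a` or `b`, and either choice breaks the tie. -/
theorem MedianGraph.dist_ne_of_adj (hmed : MedianGraph G) {a b : V} (hab : G.Adj a b) (z : V) :
    G.dist z a ≠ G.dist z b := by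
  intro heq
  obtain ⟨m, ⟨hm_ab, hm_bz, hm_za⟩, -⟩ := hmed.2 a b z
  have hm_ab : G.dist a m + G.dist m b = 1 := (dist_eq_one_iff_adj.mpr hab) ▸ hm_ab
  have hm_bz : G.dist b m + G.dist m z = G.dist b z := hm_bz
  have hm_za : G.dist z m + G.dist m a = G.dist z a := hm_za
  rcases (by omega : G.dist a m = 0 ∨ G.dist m b = 0) with h | h
  · rw [← (hmed.1.dist_eq_zero_iff.mp h), SimpleGraph.dist_comm (u := b) (v := a),
      SimpleGraph.dist_comm (u := a) (v := z), SimpleGraph.dist_comm (u := b) (v := z),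
      dist_eq_one_iff_adj.mpr hab] at hm_bz
    omega
  · rw [hmed.1.dist_eq_zero_iff.mp h, SimpleGraph.dist_comm (u := b) (v := a),
      dist_eq_one_iff_adj.mpr hab] at hm_za
    omega

theorem MedianGraph.dist_eq_two (hmed : MedianGraph G) {p a b : V} (ha : G.Adj p a)
    (hb : G.Adj p b) (hab : a ≠ b) : G.dist a b = 2 := by
  have htri : G.dist a b ≤ G.dist a p + G.dist p b := hmed.1.dist_triangle
  rw [dist_eq_one_iff_adj.mpr ha.symm, dist_eq_one_iff_adj.mpr hb] at htri
  have h₀ : G.dist a b ≠ 0 := fun h => hab (hmed.1.dist_eq_zero_iff.mp h)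
  have h₁ : G.dist a b ≠ 1 := fun h => hmed.dist_ne_of_adj (dist_eq_one_iff_adj.mp h) p
    (by rw [dist_eq_one_iff_adj.mpr ha, dist_eq_one_iff_adj.mpr hb])
  omega

theorem MedianGraph.isMedian_of_adj_of_adj (hmed : MedianGraph G) {a b x z : V} (hxa : G.Adj x a)
    (hxb : G.Adj x b) (hab : a ≠ b) (ha : G.dist z a = G.dist z x + 1)
    (hb : G.dist z b = G.dist z x + 1) : IsMedian G a b z x := by
  have hab2 := hmed.dist_eq_two hxa hxb hab
  have hax : G.dist a x = 1 := dist_eq_one_iff_adj.mpr hxa.symm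
  have hxb1 : G.dist x b = 1 := dist_eq_one_iff_adj.mpr hxb
  refine ⟨?_, ?_, ?_⟩
  · show G.dist a x + G.dist x b = G.dist a b
    omega
  · show G.dist b x + G.dist x z = G.dist b z
    rw [SimpleGraph.dist_comm (u := b) (v := x), SimpleGraph.dist_comm (u := b) (v := z),
      SimpleGraph.dist_comm (u := x) (v := z)]
    omega
  · show G.dist z x + G.dist x a = G.dist z a
    rw [SimpleGraph.dist_comm (u := x) (v := a)]
    omega

/-- Both `x` and `y` would be medians of `a, b, z`. -/
theorem MedianGraph.square_dist_ne (hmed : MedianGraph G) {x a b y z : V}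
    (hsq : IsSquare G x a b y) (ha : G.dist z a = G.dist z x + 1)
    (hb : G.dist z b = G.dist z x + 1) : G.dist z y ≠ G.dist z x := by
  obtain ⟨hxa, hby, hxb, hay, hxy, hab⟩ := hsq
  intro hyx
  refine hxy ((hmed.2 a b z).unique ?_ ?_)
  · exact hmed.isMedian_of_adj_of_adj hxa hxb hab ha hb
  · exact hmed.isMedian_of_adj_of_adj hay.symm hby.symm hab (by omega) (by omega)

theorem MedianGraph.dist_eq_add_two_of_isSquare (hmed : MedianGraph G) {x a b y z : V}
    (hsq : IsSquare G x a b y) (ha : G.dist z a = G.dist z x + 1)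
    (hb : G.dist z b = G.dist z x + 1) : G.dist z y = G.dist z x + 2 := by
  have hne := hmed.square_dist_ne hsq ha hb
  have hay := hmed.dist_ne_of_adj hsq.2.2.2.1 z
  have := hsq.2.2.2.1.diff_dist_adj (u := z)
  omega

theorem IsSquare.symm {u v x y : V} (h : IsSquare G u v x y) : IsSquare G x y u v :=
  ⟨h.2.1, h.1, h.2.2.1.symm, h.2.2.2.1.symm, fun e => h.2.2.2.2.2 e.symm,
    fun e => h.2.2.2.2.1 e.symm⟩

theorem IsSquare.reverse {u v x y : V} (h : IsSquare G u v x y) : IsSquare G v u y x :=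
  ⟨h.1.symm, h.2.1.symm, h.2.2.2.1, h.2.2.1, h.2.2.2.2.2, h.2.2.2.2.1⟩

theorem MedianGraph.closerSet_subset_of_isSquare (hmed : MedianGraph G) {u v x y : V}
    (hsq : IsSquare G u v x y) : closerSet G u v ⊆ closerSet G x y := by
  intro z hz
  simp only [mem_closerSet] at hz ⊢
  by_contra hxy
  have hyx := (hmed.dist_ne_of_adj hsq.2.1 z).symm.lt_of_le (not_lt.mp hxy)
  have hv := dist_eq_add_one_of_adj_of_lt hsq.1 hz
  have hx := dist_eq_add_one_of_adj_of_lt hsq.2.1.symm hyx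
  have hvy := hsq.2.2.2.1.diff_dist_adj (u := z)
  rcases (hsq.2.2.1.diff_dist_adj (u := z)) with h | h | h
  · exact hmed.dist_ne_of_adj hsq.2.2.1 z h.symm
  · exact hmed.square_dist_ne hsq hv h (by omega)
  · omega

theorem MedianGraph.closerSet_eq_of_isSquare (hmed : MedianGraph G) {u v x y : V}
    (hsq : IsSquare G u v x y) : closerSet G u v = closerSet G x y :=
  (hmed.closerSet_subset_of_isSquare hsq).antisymm (hmed.closerSet_subset_of_isSquare hsq.symm)

theorem MedianGraph.exists_quadrangle (hmed : MedianGraph G) {x y p z : V} (hxp : G.Adj x p)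
    (hyp : G.Adj y p) (hxy : x ≠ y) (hx : G.dist x z + 1 = G.dist p z)
    (hy : G.dist y z + 1 = G.dist p z) :
    ∃ m, G.Adj m x ∧ G.Adj m y ∧ G.dist m z + 2 = G.dist p z := by
  obtain ⟨m, ⟨hxy', hyz, hzx⟩, -⟩ := hmed.2 x y z
  have hxy' : G.dist x m + G.dist m y = 2 := hmed.dist_eq_two hxp.symm hyp.symm hxy ▸ hxy'
  have hyz : G.dist y m + G.dist m z = G.dist y z := hyz
  have hzx : G.dist z m + G.dist m x = G.dist z x := hzx
  rw [SimpleGraph.dist_comm (u := y) (v := m)] at hyz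
  rw [SimpleGraph.dist_comm (u := z) (v := m), SimpleGraph.dist_comm (u := m) (v := x),
    SimpleGraph.dist_comm (u := z) (v := x)] at hzx
  exact ⟨m, (dist_eq_one_iff_adj.mp (by omega : G.dist x m = 1)).symm,
    dist_eq_one_iff_adj.mp (by omega), by omega⟩

end Median

section Theta

variable {G : SimpleGraph V}

theorem theta0_symm {e f : Sym2 V} (h : Theta0 G e f) : Theta0 G f e := by
  obtain ⟨u, v, x, y, hsq, rfl, rfl⟩ := h
  exact ⟨x, y, u, v, hsq.symm, rfl, rfl⟩

instance : Std.Symm (Theta0 G) := ⟨fun _ _ => theta0_symm⟩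

theorem ThetaClass.eq_setOf_theta {C : Set (Sym2 V)} (hC : ThetaClass G C) {e : Sym2 V}
    (he : e ∈ C) : C = {f | Theta G e f} := by
  obtain ⟨e₀, he₀, rfl⟩ := hC
  obtain ⟨-, he, h₀⟩ := (he : Theta G e₀ e)
  ext f
  exact ⟨fun ⟨_, hf, h⟩ => ⟨he, hf, (Std.Symm.symm _ _ h₀).trans h⟩,
    fun ⟨_, hf, h⟩ => ⟨he₀, hf, h₀.trans h⟩⟩

theorem MedianGraph.closerSet_eq_of_reflTransGen (hmed : MedianGraph G) {a b p q : V}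
    (h : Relation.ReflTransGen (Theta0 G) s(a, b) s(p, q)) :
    closerSet G a b = closerSet G p q ∨ closerSet G a b = closerSet G q p := by
  generalize he : s(p, q) = e at h
  induction h generalizing p q with
  | refl => rcases Sym2.eq_iff.mp he with ⟨rfl, rfl⟩ | ⟨rfl, rfl⟩ <;> simp
  | tail _ h₀ ih =>
    obtain ⟨u, v, x, y, hsq, rfl, rfl⟩ := h₀
    have hW := hmed.closerSet_eq_of_isSquare hsq
    have hW' := hmed.closerSet_eq_of_isSquare hsq.reverse
    rcases Sym2.eq_iff.mp he with ⟨rfl, rfl⟩ | ⟨rfl, rfl⟩ <;>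
      rcases ih rfl with h | h <;> simp [h, hW, hW']

/-- Induction on `d(p, a)`: the quadrangle condition gives a crossing edge one step closer to
`ab` that is opposite to `pq` in a square. -/
theorem MedianGraph.reflTransGen_of_crossing (hmed : MedianGraph G) {a b p q : V}
    (hab : G.Adj a b) (hpq : G.Adj p q) (hp : p ∈ closerSet G a b) (hq : q ∈ closerSet G b a) :
    Relation.ReflTransGen (Theta0 G) s(a, b) s(p, q) := by
  obtain ⟨n, hn⟩ : ∃ n, G.dist p a = n := ⟨_, rfl⟩
  induction n using Nat.strong_induction_on generalizing p q with
  | _ n ih =>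
  simp only [mem_closerSet] at hp hq
  have hpb := dist_eq_add_one_of_adj_of_lt hab hp
  have hqa := dist_eq_add_one_of_adj_of_lt hab.symm hq
  have hpq_b := dist_le_dist_add_one_of_adj hpq b
  have hqp_a := dist_le_dist_add_one_of_adj hpq.symm a
  rcases eq_or_ne p a with rfl | hpa
  · rw [SimpleGraph.dist_self] at hqp_a
    obtain rfl : q = b := hmed.1.dist_eq_zero_iff.mp (by omega)
    rfl
  obtain ⟨p', hpp', hp'a⟩ := exists_adj_dist_add_one_eq hmed.1 hpa
  have hpp'_b := dist_le_dist_add_one_of_adj hpp' b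
  have hp'a_b := hab.diff_dist_adj (u := p')
  have hp'q : p' ≠ q := by rintro rfl; omega
  obtain ⟨m, hmp', hmq, hmb⟩ :=
    hmed.exists_quadrangle (z := b) hpp'.symm hpq.symm hp'q (by omega) (by omega)
  have hmp'_a := dist_le_dist_add_one_of_adj hmp' a
  have hqm_a := dist_le_dist_add_one_of_adj hmq.symm a
  have hsq : IsSquare G p' m p q := ⟨hmp'.symm, hpq, hpp'.symm, hmq, hp'q, by rintro rfl; omega⟩
  refine (ih (n - 1) (by omega) hmp'.symm ?_ ?_ (by omega)).tail ⟨p', m, p, q, hsq, rfl, rfl⟩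
  · rw [mem_closerSet]; omega
  · rw [mem_closerSet]; omega

theorem MedianGraph.separates_of_mem_closerSet (hmed : MedianGraph G) {a b x y : V}
    (hab : G.Adj a b) (hx : x ∈ closerSet G a b) (hy : y ∈ closerSet G b a) :
    Separates G {f | Theta G s(a, b) f} x y := by
  rintro ⟨p⟩
  suffices ∀ {x y}, (G.deleteEdges {f | Theta G s(a, b) f}).Walk x y →
      x ∈ closerSet G a b → y ∈ closerSet G a b from
    lt_asymm (mem_closerSet.mp (this p hx)) (mem_closerSet.mp hy)
  intro x y p
  induction p with
  | nil => exact id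
  | @cons x x' _ h _ ih =>
    intro hx
    rw [deleteEdges_adj] at h
    refine ih ((hmed.dist_ne_of_adj hab x').lt_or_gt.resolve_right fun hx' => h.2 ?_)
    exact ⟨G.mem_edgeSet.mpr hab, G.mem_edgeSet.mpr h.1,
      hmed.reflTransGen_of_crossing hab h.1 hx hx'⟩

theorem MedianGraph.reachable_of_mem_closerSet (hmed : MedianGraph G) {a b x : V}
    (hx : x ∈ closerSet G a b) : (G.deleteEdges {f | Theta G s(a, b) f}).Reachable x a := by
  obtain ⟨n, hn⟩ : ∃ n, G.dist x a = n := ⟨_, rfl⟩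
  induction n using Nat.strong_induction_on generalizing x with
  | _ n ih =>
  rcases eq_or_ne x a with rfl | hxa
  · rfl
  obtain ⟨x', hxx', hx'a⟩ := exists_adj_dist_add_one_eq hmed.1 hxa
  have hxx'_b := dist_le_dist_add_one_of_adj hxx' b
  have hx' : x' ∈ closerSet G a b := by
    simp only [mem_closerSet] at hx ⊢; omega
  have hnot : s(x, x') ∉ {f | Theta G s(a, b) f} := by
    rintro ⟨-, -, h⟩
    rcases hmed.closerSet_eq_of_reflTransGen h with hW | hW
    · have := hW ▸ hx'
      simp [dist_eq_one_iff_adj.mpr hxx'.symm] at this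
    · have := hW ▸ hx
      simp [dist_eq_one_iff_adj.mpr hxx'] at this
  exact (deleteEdges_adj.mpr ⟨hxx', hnot⟩).reachable.trans (ih _ (by omega) hx' rfl)

end Theta

section Cube

variable {G : SimpleGraph V}

theorem symmDiff_insert_self {ι : Type*} [DecidableEq ι] {A : Finset ι} {i : ι} (hi : i ∉ A) :
    A ∆ insert i A = {i} := by
  ext j
  by_cases hj : j = i <;> simp [Finset.mem_symmDiff, hj, hi]

theorem cubeGraph_adj_insert {k : ℕ} {A : Finset (Fin k)} {i : Fin k} (hi : i ∉ A) :
    (cubeGraph k).Adj A (insert i A) := by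
  show (A ∆ insert i A).card = 1
  rw [symmDiff_insert_self hi, Finset.card_singleton]

theorem cubeGraph_adj_symmDiff_left_iff {k : ℕ} (P A B : Finset (Fin k)) :
    (cubeGraph k).Adj (P ∆ A) (P ∆ B) ↔ (cubeGraph k).Adj A B := by
  show (P ∆ A ∆ (P ∆ B)).card = 1 ↔ (A ∆ B).card = 1
  rw [symmDiff_symmDiff_symmDiff_comm, symmDiff_self, bot_symmDiff]

theorem cubeGraph_preconnected (k : ℕ) : (cubeGraph k).Preconnected := by
  have h : ∀ A, (cubeGraph k).Reachable ∅ A := by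
    intro A
    induction A using Finset.induction_on with
    | empty => rfl
    | insert i A hi ih => exact ih.trans (cubeGraph_adj_insert hi).reachable
  exact fun A B => (h A).symm.trans (h B)

theorem IsInducedCube.reachable_deleteEdges {S : Set V} (hS : IsInducedCube G S)
    {C : Set (Sym2 V)} (hC : ThetaClass G C) (hCS : C ∉ cubeClasses G S) {x y : V}
    (hx : x ∈ S) (hy : y ∈ S) : (G.deleteEdges C).Reachable x y := by
  obtain ⟨k, ⟨φ⟩⟩ := hS
  let f : G.induce S →g G.deleteEdges C :=
    ⟨Subtype.val, fun {a b} hab =>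
      deleteEdges_adj.mpr ⟨hab, fun hmem => hCS ⟨hC, a, a.2, b, b.2, hab, hmem⟩⟩⟩
  exact (Iso.reachable_iff.mp (cubeGraph_preconnected k (φ ⟨x, hx⟩) (φ ⟨y, hy⟩))).map f

/-- The squares of the cube carry the hypothesis `hz` at the base `h ∅` to every edge. -/
theorem MedianGraph.dist_insert_eq_add_one (hmed : MedianGraph G) {ι : Type*} [DecidableEq ι]
    {h : Finset ι → V} (hinj : Function.Injective h)
    (hadj : ∀ X i, i ∉ X → G.Adj (h X) (h (insert i X))) {z : V}
    (hz : ∀ i, G.dist z (h ∅) < G.dist z (h {i})) (X : Finset ι) {i : ι} (hi : i ∉ X) :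
    G.dist z (h (insert i X)) = G.dist z (h X) + 1 := by
  induction X using Finset.induction_on generalizing i with
  | empty =>
    have := hadj ∅ i (Finset.notMem_empty i)
    rw [Finset.insert_empty] at this ⊢
    exact dist_eq_add_one_of_adj_of_lt this (hz i)
  | insert j Y hj ih =>
    have hij : i ≠ j := fun e => hi (e ▸ Finset.mem_insert_self j Y)
    have hiY : i ∉ Y := fun h => hi (Finset.mem_insert_of_mem h)
    have hsq : IsSquare G (h Y) (h (insert i Y)) (h (insert j Y)) (h (insert i (insert j Y))) := by
      refine ⟨hadj Y i hiY, hadj _ i hi, hadj Y j hj, ?_,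
        hinj.ne (Finset.ne_insert_of_notMem Y _ hiY),
        hinj.ne (Finset.ne_insert_of_notMem _ Y hi).symm⟩
      rw [Finset.insert_comm]
      exact hadj _ j (by simp [hij.symm, hj])
    have := hmed.dist_eq_add_two_of_isSquare hsq (ih hiY) (ih hj)
    rw [this, ih hj]

theorem MedianGraph.dist_eq_add_card (hmed : MedianGraph G) {ι : Type*} [DecidableEq ι]
    {h : Finset ι → V} (hinj : Function.Injective h)
    (hadj : ∀ X i, i ∉ X → G.Adj (h X) (h (insert i X))) {z : V}
    (hz : ∀ i, G.dist z (h ∅) < G.dist z (h {i})) (X : Finset ι) :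
    G.dist z (h X) = G.dist z (h ∅) + X.card := by
  induction X using Finset.induction_on with
  | empty => simp
  | insert i X hi ih =>
    rw [hmed.dist_insert_eq_add_one hinj hadj hz X hi, ih, Finset.card_insert_of_notMem hi]
    rfl

theorem MedianGraph.dist_eq_add_card_symmDiff (hmed : MedianGraph G) {S : Set V} {k : ℕ}
    (φ : G.induce S ≃g cubeGraph k) (c y : S) {z : V}
    (hz : ∀ x ∈ S, G.Adj c x → G.dist z c < G.dist z x) :
    G.dist z y = G.dist z c + (φ c ∆ φ y).card := by
  let h : Finset (Fin k) → V := fun X => φ.symm (φ c ∆ X)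
  have hinj : Function.Injective h :=
    Subtype.val_injective.comp (φ.symm.injective.comp (symmDiff_right_injective _))
  have hadj : ∀ X i, i ∉ X → G.Adj (h X) (h (insert i X)) := fun X i hi =>
    φ.symm.map_adj_iff.mpr ((cubeGraph_adj_symmDiff_left_iff _ _ _).mpr (cubeGraph_adj_insert hi))
  have h₀ : h ∅ = c := by simp [h, ← Finset.bot_eq_empty]
  have hy : h (φ c ∆ φ y) = y := by simp [h]
  have hz' : ∀ i, G.dist z (h ∅) < G.dist z (h {i}) := fun i => by
    have hci := hadj ∅ i (Finset.notMem_empty i)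
    rw [Finset.insert_empty, h₀] at hci
    rw [h₀]
    exact hz _ (φ.symm _).2 hci
  have := hmed.dist_eq_add_card hinj hadj hz' (φ c ∆ φ y)
  rwa [hy, h₀] at this

theorem symmDiff_eq_univ_of_isAntiBasis {S : Set V} {k : ℕ} (φ : G.induce S ≃g cubeGraph k)
    {v₀ : V} {c w : S} (hlevel : ∀ x : S, G.dist v₀ x = G.dist v₀ c + (φ c ∆ φ x).card)
    (hw : IsAntiBasis G v₀ S w) : φ c ∆ φ w = Finset.univ := by
  refine Finset.eq_univ_of_forall fun i => by_contra fun hi => ?_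
  let w' : S := φ.symm (φ c ∆ insert i (φ c ∆ φ w))
  have hadj : G.Adj w w' := by
    have hw' : φ.symm (φ c ∆ (φ c ∆ φ w)) = w := by simp
    rw [← hw']
    exact φ.symm.map_adj_iff.mpr
      ((cubeGraph_adj_symmDiff_left_iff _ _ _).mpr (cubeGraph_adj_insert hi))
  have hlt := hw.2 w' w'.2 hadj
  rw [hlevel w', hlevel w] at hlt
  simp [w', Finset.card_insert_of_notMem hi] at hlt

theorem MedianGraph.mem_interval_of_mem_cube (hmed : MedianGraph G) {S : Set V}
    (hS : IsInducedCube G S) {v₀ v w : V} (hv : IsBasis G v₀ S v) (hw : IsAntiBasis G v₀ S w)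
    {y : V} (hy : y ∈ S) : v ∈ interval G v₀ y ∧ y ∈ interval G v₀ w := by
  obtain ⟨k, ⟨φ⟩⟩ := hS
  have hdist_from (c x : S) : G.dist c x = (φ c ∆ φ x).card := by
    simpa using hmed.dist_eq_add_card_symmDiff φ c x (z := c)
      fun x _ hcx => by simpa using hmed.1.pos_dist_of_ne hcx.ne
  let v' : S := ⟨v, hv.1⟩
  let w' : S := ⟨w, hw.1⟩
  let y' : S := ⟨y, hy⟩
  have hlevel (x : S) := hmed.dist_eq_add_card_symmDiff φ v' x hv.2
  have hanti := symmDiff_eq_univ_of_isAntiBasis φ (w := w') hlevel hw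
  have hcompl : φ w' ∆ φ y' = (φ v' ∆ φ y')ᶜ := by
    rw [← hnot_eq_compl, ← top_symmDiff, Finset.top_eq_univ, ← hanti,
      symmDiff_symmDiff_symmDiff_comm, symmDiff_self, bot_symmDiff]
  have hcard : (φ v' ∆ φ y').card + (φ w' ∆ φ y').card = k := by
    rw [hcompl, Finset.card_add_card_compl, Fintype.card_fin]
  have hvy : G.dist v y = (φ v' ∆ φ y').card := hdist_from v' y'
  have hwy : G.dist w y = (φ w' ∆ φ y').card := hdist_from w' y'
  have hly : G.dist v₀ y = G.dist v₀ v + (φ v' ∆ φ y').card := hlevel y'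
  have hlw : G.dist v₀ w = G.dist v₀ v + (φ v' ∆ φ w').card := hlevel w'
  rw [hanti, Finset.card_univ, Fintype.card_fin] at hlw
  refine ⟨show G.dist v₀ v + G.dist v y = G.dist v₀ y by omega, ?_⟩
  show G.dist v₀ y + G.dist y w = G.dist v₀ w
  rw [SimpleGraph.dist_comm (u := y)]
  omega

theorem MedianGraph.separates_of_mem_cubeClasses (hmed : MedianGraph G) {S : Set V}
    (hS : IsInducedCube G S) {v₀ u v w : V} (hu : u ∈ interval G v₀ v)
    (hv : IsBasis G v₀ S v) (hw : IsAntiBasis G v₀ S w) {C : Set (Sym2 V)} (hC : C ∈ cubeClasses G S) :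
    Separates G C u w ∧ ¬ Separates G C u v := by
  obtain ⟨hCθ, x, hx, y, hy, hxy, hxyC⟩ := hC
  wlog hlt : G.dist v₀ x < G.dist v₀ y generalizing x y
  · exact this y hy x hx hxy.symm (Sym2.eq_swap ▸ hxyC)
      ((hmed.dist_ne_of_adj hxy v₀).lt_or_gt.resolve_left hlt)
  rw [hCθ.eq_setOf_theta hxyC]
  obtain ⟨hvx, hxw⟩ := hmed.mem_interval_of_mem_cube hS hv hw hx
  obtain ⟨hvy, hyw⟩ := hmed.mem_interval_of_mem_cube hS hv hw hy
  have hux := (mem_interval_trans hmed.1 hu hvx).1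
  have huy := (mem_interval_trans hmed.1 hu hvy).1
  have hu_side := mem_closerSet_of_mem_interval_left hux huy hlt
  refine ⟨hmed.separates_of_mem_closerSet hxy hu_side
    (mem_closerSet_of_mem_interval_right hxw hyw hlt), not_not.mpr ?_⟩
  exact (hmed.reachable_of_mem_closerSet hu_side).trans
    (hmed.reachable_of_mem_closerSet (mem_closerSet_of_mem_interval_left hvx hvy hlt)).symm

end Cube

theorem signature_eq_union_of_separates {G : SimpleGraph V} {u v w : V}
    {L : Set (Set (Sym2 V))} (hLθ : ∀ C ∈ L, ThetaClass G C)
    (hL : ∀ C ∈ L, Separates G C u w ∧ ¬ Separates G C u v)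
    (hnL : ∀ C, ThetaClass G C → C ∉ L → (G.deleteEdges C).Reachable v w) :
    signature G u w = signature G u v ∪ L ∧ signature G u v ∩ L = ∅ := by
  refine ⟨Set.ext fun C => ?_, Set.eq_empty_of_forall_notMem fun C ⟨⟨_, huv⟩, hC⟩ =>
    (hL C hC).2 huv⟩
  by_cases hC : C ∈ L
  · simp only [Set.mem_union, hC, or_true, iff_true]
    exact ⟨hLθ C hC, (hL C hC).1⟩
  · simp only [signature, Set.mem_union, hC, or_false]
    refine and_congr_right fun hθ => not_congr ?_
    have hvw := hnL C hθ hC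
    exact ⟨fun h => h.trans hvw.symm, fun h => h.trans hvw⟩

theorem signature_of_cube_extension_general {V : Type*} (G : SimpleGraph V)
    (hmed : MedianGraph G) (v₀ u v w : V)
    (hu : u ∈ interval G v₀ v) (hv : v ∈ interval G v₀ w)
    (L : Set (Set (Sym2 V)))
    (S : Set V) (hS : IsInducedCube G S) (hbasis : IsBasis G v₀ S v)
    (hanti : IsAntiBasis G v₀ S w) (hclasses : cubeClasses G S = L) :
    u ∈ interval G v₀ w ∧ v ∈ interval G u w ∧
    signature G u w = signature G u v ∪ L ∧
    signature G u v ∩ L = ∅ := by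
  subst hclasses
  obtain ⟨huw, hvuw⟩ := mem_interval_trans hmed.1 hu hv
  exact ⟨huw, hvuw, signature_eq_union_of_separates (fun _ hC => hC.1)
    (fun _ => hmed.separates_of_mem_cubeClasses hS hu hbasis hanti)
    (fun _ hθ hC => hS.reachable_deleteEdges hθ hC hbasis.1 hanti.1)⟩

/-- In a median graph with basepoint `v₀`, if `u ∈ I(v₀,v)`,
`v ∈ I(v₀,w)`, and `v` and `w` are the basis and anti-basis of an induced
hypercube whose Θ-classes form a POF `L` outgoing from `v`, then `u ∈ I(v₀,w)`,
`v ∈ I(u,w)`, and `σ_{u,w} = σ_{u,v} ∪ L` with `σ_{u,v} ∩ L = ∅`. -/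
theorem signature_of_cube_extension {V : Type*} [Fintype V] (G : SimpleGraph V)
    (hmed : MedianGraph G) (v₀ u v w : V)
    (hu : u ∈ interval G v₀ v) (hv : v ∈ interval G v₀ w)
    (L : Set (Set (Sym2 V))) (hL : OutgoingPOF G v₀ v L)
    (S : Set V) (hS : IsInducedCube G S) (hbasis : IsBasis G v₀ S v)
    (hanti : IsAntiBasis G v₀ S w) (hclasses : cubeClasses G S = L) :
    u ∈ interval G v₀ w ∧ v ∈ interval G u w ∧
    signature G u w = signature G u v ∪ L ∧
    signature G u v ∩ L = ∅ :=
  signature_of_cube_extension_general G hmed v₀ u v w hu hv L S hS hbasis hanti hclasses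

end MedianPaper
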